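/- Let y ∈ V^n be a probability vector with positive components, let λ ∈ (0,1), let 0 < d < n−1, and let k be a positive integer. Then for every x ∈ K_d^λ(y): x^{⊗k} ◁^w λ^k y^{⊗k} if and only if y_{d+1}^k > y_n^{k−1} y_d. -/

import Mathlib

noncomputable section

/-- `eSum x l` : the sum of the `l` largest components of `x`. -/
def eSum {n : ℕ} (x : Fin n → ℝ) (l : ℕ) : ℝ :=
  sSup {r | ∃ s : Finset (Fin n), s.card = l ∧ r = ∑ i ∈ s, x i}

/-- `ESum x l` : the sum of the `l` smallest components of `x`. -/
def ESum {n : ℕ} (x : Fin n → ℝ) (l : ℕ) : ℝ :=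
  sInf {r | ∃ s : Finset (Fin n), s.card = l ∧ r = ∑ i ∈ s, x i}

/-- Majorization `x ≺ y` (for vectors with equal total sum):
`e_l(x) ≤ e_l(y)` for all `1 ≤ l ≤ n`. -/
def Maj {n : ℕ} (x y : Fin n → ℝ) : Prop :=
  (∑ i, x i) = (∑ i, y i) ∧ ∀ l : ℕ, 1 ≤ l → l ≤ n → eSum x l ≤ eSum y l

/-- Strict majorization `x ◁ y`: equal total sums and `e_l(x) < e_l(y)` for all
`1 ≤ l ≤ n - 1`. -/
def SMaj {n : ℕ} (x y : Fin n → ℝ) : Prop :=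
  (∑ i, x i) = (∑ i, y i) ∧ ∀ l : ℕ, 1 ≤ l → l + 1 ≤ n → eSum x l < eSum y l

/-- Super-majorization `x ≺ʷ y` : `E_l(x) ≥ E_l(y)` for all `1 ≤ l ≤ n`. -/
def SupMaj {n : ℕ} (x y : Fin n → ℝ) : Prop :=
  ∀ l : ℕ, 1 ≤ l → l ≤ n → ESum y l ≤ ESum x l

/-- Strict super-majorization `x ◁ʷ y` : `E_l(x) > E_l(y)` for all `1 ≤ l ≤ n`. -/
def SSupMaj {n : ℕ} (x y : Fin n → ℝ) : Prop :=
  ∀ l : ℕ, 1 ≤ l → l ≤ n → ESum y l < ESum x l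

/-- Tensor product of two vectors: the vector of all pairwise products. -/
def tensor {m k : ℕ} (x : Fin m → ℝ) (c : Fin k → ℝ) : Fin (m * k) → ℝ :=
  fun i => x (finProdFinEquiv.symm i).1 * c (finProdFinEquiv.symm i).2

/-- `k`-fold tensor power of a vector. -/
def tpow {n : ℕ} (x : Fin n → ℝ) (k : ℕ) : Fin (n ^ k) → ℝ :=
  fun i => ∏ j : Fin k, x (finFunctionFinEquiv.symm i j)

/-- `V^n` : probability vectors with components in non-increasing order. -/
def Vn (n : ℕ) : Set (Fin n → ℝ) :=
  {x | (∀ i, 0 ≤ x i) ∧ (∑ i, x i) = 1 ∧ Antitone x}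

/-- `S(y)` : members of `V^n` majorized by `y`. -/
def Sset {n : ℕ} (y : Fin n → ℝ) : Set (Fin n → ℝ) :=
  {x ∈ Vn n | Maj x y}

/-- `T(y,c)` : members of `V^n` with `x ⊗ c ≺ y ⊗ c`. -/
def Tcat {n k : ℕ} (y : Fin n → ℝ) (c : Fin k → ℝ) : Set (Fin n → ℝ) :=
  {x ∈ Vn n | Maj (tensor x c) (tensor y c)}

/-- Local uniformity `l_u(c)` : the minimum of the consecutive ratios `c_{i+1}/c_i`. -/
def lu {k : ℕ} (c : Fin k → ℝ) : ℝ :=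
  sInf {r | ∃ i : ℕ, ∃ h : i + 1 < k, r = c ⟨i + 1, h⟩ / c ⟨i, Nat.lt_of_succ_lt h⟩}

/-- Global uniformity `g_u(c) = c_k / c_1` (smallest over largest component of a
non-increasingly ordered vector). -/
def gu {k : ℕ} (c : Fin k → ℝ) : ℝ :=
  if h : 0 < k then c ⟨k - 1, Nat.sub_lt h Nat.one_pos⟩ / c ⟨0, h⟩ else 1

/-- Largest component. -/
def maxc {n : ℕ} (x : Fin n → ℝ) : ℝ := sSup (Set.range x)

/-- Smallest component. -/
def minc {n : ℕ} (x : Fin n → ℝ) : ℝ := sInf (Set.range x)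

/-- `c'` is a (contiguous) segment of `c`. -/
def IsSegment {j k : ℕ} (c' : Fin j → ℝ) (c : Fin k → ℝ) : Prop :=
  ∃ (i : ℕ) (_h : i + j ≤ k), ∀ t : Fin j, c' t = c ⟨i + t, by have := t.isLt; omega⟩

/-- The first `d` components of a vector. -/
def take {n : ℕ} (x : Fin n → ℝ) (d : ℕ) (h : d ≤ n) : Fin d → ℝ :=
  fun i => x ⟨i, Nat.lt_of_lt_of_le i.isLt h⟩

/-- The components of a vector after the first `d` ones. -/
def drop {n : ℕ} (x : Fin n → ℝ) (d : ℕ) : Fin (n - d) → ℝ :=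
  fun i => x ⟨d + i, by have := i.isLt; omega⟩

/-- The segment `(c_i, …, c_j)` of `c` (`0`-based indices). -/
def seg {k : ℕ} (c : Fin k → ℝ) (i j : ℕ) (hij : i ≤ j) (hj : j < k) :
    Fin (j - i + 1) → ℝ :=
  fun t => c ⟨i + t, by have := t.isLt; omega⟩

/-- `(c_i, …, c_j)` is a block of the decomposition `[c]_α` of the (positive,
non-increasingly ordered) vector `c` according to `α`: ratios within the block
exceed `α`, and the ratios at the two boundaries of the block are `≤ α`
(or the block touches an end of `c`). -/
def IsBlock {k : ℕ} (α : ℝ) (c : Fin k → ℝ) (i j : ℕ) : Prop :=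
  ∃ (hij : i ≤ j) (hj : j < k),
    (i = 0 ∨ c ⟨i, by omega⟩ / c ⟨i - 1, by omega⟩ ≤ α) ∧
    (j = k - 1 ∨ ∃ hj1 : j + 1 < k, c ⟨j + 1, hj1⟩ / c ⟨j, hj⟩ ≤ α) ∧
    (∀ (t : ℕ) (ht1 : i ≤ t) (ht2 : t < j), α < c ⟨t + 1, by omega⟩ / c ⟨t, by omega⟩)

/-- `T_k(y)` : states transformable to `y` with a `k`-dimensional catalyst. -/
def Tk {n : ℕ} (k : ℕ) (y : Fin n → ℝ) : Set (Fin n → ℝ) :=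
  {x ∈ Vn n | ∃ c : Fin k → ℝ, (∀ i, 0 < c i) ∧ (∑ i, c i) = 1 ∧ Antitone c ∧
    Maj (tensor x c) (tensor y c)}

/-- `M_k(y)` : states `x` with `x^{⊗k} ≺ y^{⊗k}`. -/
def Mk {n : ℕ} (k : ℕ) (y : Fin n → ℝ) : Set (Fin n → ℝ) :=
  {x ∈ Vn n | Maj (tpow x k) (tpow y k)}

/-- `T(y)` : states transformable to `y` with some catalyst. -/
def Tinf {n : ℕ} (y : Fin n → ℝ) : Set (Fin n → ℝ) :=
  {x ∈ Vn n | ∃ (k : ℕ) (c : Fin k → ℝ), 0 < k ∧ (∀ i, 0 < c i) ∧ (∑ i, c i) = 1 ∧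
    Antitone c ∧ Maj (tensor x c) (tensor y c)}

/-- `M(y)` : states `x` with `x^{⊗k} ≺ y^{⊗k}` for some `k ≥ 1`. -/
def Minf {n : ℕ} (y : Fin n → ℝ) : Set (Fin n → ℝ) :=
  {x ∈ Vn n | ∃ k : ℕ, 1 ≤ k ∧ Maj (tpow x k) (tpow y k)}

/-- `S^λ(y)` : states `x` with `x ≺ʷ λ y`. -/
def Slam {n : ℕ} (lam : ℝ) (y : Fin n → ℝ) : Set (Fin n → ℝ) :=
  {x ∈ Vn n | SupMaj x (fun i => lam * y i)}

/-- `T^λ(y,c)` : states `x` with `x ⊗ c ≺ʷ λ (y ⊗ c)`. -/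
def Tlamc {n k : ℕ} (lam : ℝ) (y : Fin n → ℝ) (c : Fin k → ℝ) : Set (Fin n → ℝ) :=
  {x ∈ Vn n | SupMaj (tensor x c) (fun i => lam * tensor y c i)}

/-- `T_k^λ(y)`. -/
def Tklam {n : ℕ} (k : ℕ) (lam : ℝ) (y : Fin n → ℝ) : Set (Fin n → ℝ) :=
  {x ∈ Vn n | ∃ c : Fin k → ℝ, (∀ i, 0 < c i) ∧ (∑ i, c i) = 1 ∧ Antitone c ∧
    SupMaj (tensor x c) (fun i => lam * tensor y c i)}

/-- `M_k^λ(y)`. -/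
def Mklam {n : ℕ} (k : ℕ) (lam : ℝ) (y : Fin n → ℝ) : Set (Fin n → ℝ) :=
  {x ∈ Vn n | SupMaj (tpow x k) (fun i => lam ^ k * tpow y k i)}

/-- `T^λ(y)`. -/
def Tlaminf {n : ℕ} (lam : ℝ) (y : Fin n → ℝ) : Set (Fin n → ℝ) :=
  {x ∈ Vn n | ∃ (k : ℕ) (c : Fin k → ℝ), 0 < k ∧ (∀ i, 0 < c i) ∧ (∑ i, c i) = 1 ∧
    Antitone c ∧ SupMaj (tensor x c) (fun i => lam * tensor y c i)}

/-- `M^λ(y)`. -/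
def Mlaminf {n : ℕ} (lam : ℝ) (y : Fin n → ℝ) : Set (Fin n → ℝ) :=
  {x ∈ Vn n | ∃ k : ℕ, 1 ≤ k ∧ SupMaj (tpow x k) (fun i => lam ^ k * tpow y k i)}

/-- `K_d(y)` : concatenations `x = x' ⊕ x''` with `x' ◁ y'` and `x'' ◁ y''`,
where `y'` is the first-`d` part of `y` and `y''` the rest. -/
def Kd {n : ℕ} (y : Fin n → ℝ) (d : ℕ) (h : d ≤ n) : Set (Fin n → ℝ) :=
  {x ∈ Vn n | SMaj (take x d h) (take y d h) ∧ SMaj (drop x d) (drop y d)}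

/-- `y(d)` : first `d` components equal to `e_d(y)/d`, the last `n-d` equal to
`(1 - e_d(y))/(n-d)`. -/
def yvec {n : ℕ} (y : Fin n → ℝ) (d : ℕ) : Fin n → ℝ :=
  fun i => if (i : ℕ) < d then eSum y d / d else (1 - eSum y d) / (n - d)

/-- `K_d^λ(y)` : states `x ∈ S^λ(y)` with `E_l(x) = λ E_l(y)` iff `l = n - d`. -/
def Kdlam {n : ℕ} (lam : ℝ) (y : Fin n → ℝ) (d : ℕ) : Set (Fin n → ℝ) :=
  {x ∈ Vn n | SupMaj x (fun i => lam * y i) ∧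
    ∀ l : ℕ, 1 ≤ l → l ≤ n → (ESum x l = lam * ESum y l ↔ l = n - d)}


/-!
For antitone vectors the sums `E_l` are sums over upper sets of indices, so `x ∈ K_d^λ(y)` says
that on every upper set `U` of `Fin n` one has `λ y(U) ≤ x(U)`, with equality only for `U = ∅`
and `U = [d, n)`. This property tensorizes: slicing an upper set `S` of `(Fin n)^k` along the
first coordinate and applying the induction hypothesis to the slices and the base case to the
fibres gives `λ^k y^{⊗k}(S) ≤ x^{⊗k}(S)`, with equality only for `S = ∅` and the box `[d, n)^k`.
As `x^{⊗k}` is antitone for the product order, every `E_l(x^{⊗k})` is attained on an upper set,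
so strict domination can only fail at `l = (n - d)^k`, on the box; it fails there exactly when
the box is also minimal for `y^{⊗k}`, i.e. when trading its corner `(d, …, d)` for
`(d - 1, n - 1, …, n - 1)` does not lower the sum: `y_d^k ≤ y_{n-1}^{k-1} y_{d-1}` (`0`-based).
-/

open Finset

theorem Finset.sum_le_sum_of_card_eq_of_forall_sdiff_le {ι M : Type*} [DecidableEq ι]
    [AddCommMonoid M] [LinearOrder M] [IsOrderedCancelAddMonoid M] {s t : Finset ι}
    {f : ι → M} (hst : #s = #t) (hf : ∀ i ∈ s \ t, ∀ j ∈ t \ s, f i ≤ f j) :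
    ∑ i ∈ s, f i ≤ ∑ i ∈ t, f i := by
  rw [← sum_inter_add_sum_sdiff s t, ← sum_inter_add_sum_sdiff t s, inter_comm t s]
  gcongr ∑ i ∈ s ∩ t, f i + ?_
  rcases (t \ s).eq_empty_or_nonempty with hts | hts
  · rw [hts, card_eq_zero.mp ((card_sdiff_comm hst).trans (by rw [hts, card_empty]))]
  · calc ∑ i ∈ s \ t, f i ≤ #(s \ t) • (t \ s).inf' hts f :=
          sum_le_card_nsmul _ _ _ fun i hi => le_inf' _ _ fun j hj => hf i hi j hj
      _ = #(t \ s) • (t \ s).inf' hts f := by rw [card_sdiff_comm hst]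
      _ ≤ ∑ j ∈ t \ s, f j := card_nsmul_le_sum _ _ _ fun j hj => inf'_le _ hj

theorem Finset.eq_of_pos_of_sum_mul_eq_sum_mul {ι : Type*} {s : Finset ι} {a b c : ι → ℝ}
    (ha : ∀ i ∈ s, 0 ≤ a i) (hbc : ∀ i ∈ s, b i ≤ c i)
    (h : ∑ i ∈ s, a i * b i = ∑ i ∈ s, a i * c i) {i : ι} (hi : i ∈ s) (hai : 0 < a i) :
    b i = c i :=
  (mul_right_inj' hai.ne').1 <|
    (sum_eq_sum_iff_of_le fun j hj => mul_le_mul_of_nonneg_left (hbc j hj) (ha j hj)).1 h i hi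

theorem Finset.sum_insert_erase_add {ι M : Type*} [DecidableEq ι] [AddCommMonoid M]
    {s : Finset ι} {a b : ι} (ha : a ∈ s) (hb : b ∉ s) (f : ι → M) :
    ∑ i ∈ insert b (s.erase a), f i + f a = ∑ i ∈ s, f i + f b := by
  rw [sum_insert fun h => hb (mem_of_mem_erase h), add_assoc, sum_erase_add _ _ ha, add_comm]

theorem Finset.card_insert_erase {ι : Type*} [DecidableEq ι] {s : Finset ι} {a b : ι}
    (ha : a ∈ s) (hb : b ∉ s) : #(insert b (s.erase a)) = #s := by
  rw [card_insert_of_notMem fun h => hb (mem_of_mem_erase h), card_erase_add_one ha]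

theorem Finset.eq_of_isUpperSet_of_card_eq {α : Type*} [LinearOrder α] {s t : Finset α}
    (hs : IsUpperSet (s : Set α)) (ht : IsUpperSet (t : Set α)) (h : #s = #t) : s = t :=
  (hs.total ht).elim (fun hst => eq_of_subset_of_card_le (coe_subset.1 hst) h.ge)
    fun hts => (eq_of_subset_of_card_le (coe_subset.1 hts) h.le).symm

theorem exists_isUpperSet_card_eq_sum_le {β : Type*} [Fintype β] [DecidableEq β] [PartialOrder β]
    {F : β → ℝ} (hF : Antitone F) (S : Finset β) :
    ∃ T : Finset β, #T = #S ∧ IsUpperSet (T : Set β) ∧ ∑ i ∈ T, F i ≤ ∑ i ∈ S, F i := by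
  classical
  -- among the candidates, one maximising `Φ T = ∑ b ∈ T, #{c | c < b}` must be an upper set
  let φ : β → ℕ := fun b => #{c | c < b}
  have hφ : StrictMono φ := fun b b' hbb' => by
    refine card_lt_card ((ssubset_iff_of_subset fun c hc => ?_).2 ⟨b, by simpa, by simp⟩)
    simp only [mem_filter, mem_univ, true_and] at hc ⊢
    exact hc.trans hbb'
  obtain ⟨T, hT, hmax⟩ := exists_max_image
    ({T ∈ powersetCard #S univ | ∑ i ∈ T, F i ≤ ∑ i ∈ S, F i}) (fun T => ∑ b ∈ T, φ b)
    ⟨S, by simp⟩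
  simp only [mem_filter, mem_powersetCard, subset_univ, true_and] at hT hmax
  refine ⟨T, hT.1, fun b b' hbb' hb => ?_, hT.2⟩
  by_contra hb'
  have hlt : b < b' := lt_of_le_of_ne hbb' fun h => hb' (h ▸ hb)
  have hF' := sum_insert_erase_add hb hb' F
  have hφ' := sum_insert_erase_add hb hb' φ
  have hle := hmax _ ⟨(card_insert_erase hb hb').trans hT.1, by linarith [hF hlt.le]⟩
  have hφlt := hφ hlt
  omega

section ESum

variable {n : ℕ}

theorem finite_setOf_sum_of_card_eq (v : Fin n → ℝ) (l : ℕ) :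
    {r | ∃ s : Finset (Fin n), #s = l ∧ r = ∑ i ∈ s, v i}.Finite :=
  (Set.finite_range fun s : Finset (Fin n) => ∑ i ∈ s, v i).subset
    (by rintro _ ⟨s, -, rfl⟩; exact ⟨s, rfl⟩)

theorem ESum_le_sum (v : Fin n → ℝ) (s : Finset (Fin n)) : ESum v #s ≤ ∑ i ∈ s, v i :=
  csInf_le (finite_setOf_sum_of_card_eq v #s).bddBelow ⟨s, rfl, rfl⟩

theorem exists_ESum_eq (v : Fin n → ℝ) {l : ℕ} (hl : l ≤ n) :
    ∃ s : Finset (Fin n), #s = l ∧ ESum v l = ∑ i ∈ s, v i := by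
  obtain ⟨s, -, hs⟩ := exists_subset_card_eq (s := (univ : Finset (Fin n))) (by simpa using hl)
  exact Set.Nonempty.csInf_mem (s := {r | ∃ s : Finset (Fin n), #s = l ∧ r = ∑ i ∈ s, v i})
    ⟨_, s, hs, rfl⟩ (finite_setOf_sum_of_card_eq v l)

theorem ESum_const_mul (v : Fin n → ℝ) {l : ℕ} (hl : l ≤ n) {c : ℝ} (hc : 0 ≤ c) :
    ESum (fun i => c * v i) l = c * ESum v l := by
  obtain ⟨s, rfl, hs⟩ := exists_ESum_eq v hl
  obtain ⟨t, ht, hct⟩ := exists_ESum_eq (fun i => c * v i) hl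
  apply le_antisymm
  · simpa [hs, mul_sum] using ESum_le_sum (fun i => c * v i) s
  · rw [hs, hct, ← mul_sum]
    exact mul_le_mul_of_nonneg_left (by rw [← hs, ← ht]; exact ESum_le_sum v t) hc

theorem sum_eq_ESum_of_isUpperSet {v : Fin n → ℝ} (hv : Antitone v) {U : Finset (Fin n)}
    (hU : IsUpperSet (U : Set (Fin n))) : ∑ i ∈ U, v i = ESum v #U := by
  obtain ⟨s, hs, hsum⟩ := exists_ESum_eq v (card_finset_fin_le U)
  refine le_antisymm ?_ (ESum_le_sum v U)
  rw [hsum]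
  refine sum_le_sum_of_card_eq_of_forall_sdiff_le hs.symm fun i hi j hj => hv ?_
  rw [mem_sdiff] at hi hj
  by_contra! hji
  exact hj.2 (hU hji.le hi.1)

end ESum

section TensorPow

variable {α : Type*} {k : ℕ}

def tensorPow (x : α → ℝ) (k : ℕ) (f : Fin k → α) : ℝ := ∏ j, x (f j)

theorem sum_tensorPow_piFinset [DecidableEq α] (x : α → ℝ) (A : Finset α) :
    ∑ f ∈ Fintype.piFinset (fun _ : Fin k => A), tensorPow x k f = (∑ i ∈ A, x i) ^ k := by
  rw [← Fin.prod_const, prod_univ_sum]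
  rfl

theorem tensorPow_nonneg {x : α → ℝ} (hx : 0 ≤ x) (f : Fin k → α) :
    0 ≤ tensorPow x k f :=
  prod_nonneg fun j _ => hx (f j)

theorem tensorPow_pos {x : α → ℝ} (hx : ∀ i, 0 < x i) (f : Fin k → α) :
    0 < tensorPow x k f :=
  prod_pos fun j _ => hx (f j)

theorem tensorPow_antitone [Preorder α] {x : α → ℝ} (hx : 0 ≤ x) (hxa : Antitone x) :
    Antitone (tensorPow x k) := fun _ _ hfg =>
  prod_le_prod (fun _ _ => hx _) fun j _ => hxa (hfg j)

theorem tensorPow_le_pow_of_mem_piFinset {y : α → ℝ} (hy : 0 ≤ y) {A : Finset α} {c : ℝ}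
    (hc : ∀ i ∈ A, y i ≤ c) {f : Fin k → α} (hf : f ∈ Fintype.piFinset fun _ => A) :
    tensorPow y k f ≤ c ^ k :=
  calc tensorPow y k f ≤ ∏ _j : Fin k, c :=
        prod_le_prod (fun _ _ => hy _) fun j _ => hc _ (Fintype.mem_piFinset.1 hf j)
    _ = c ^ k := by simp

theorem pow_mul_le_tensorPow_of_notMem_piFinset {y : α → ℝ} {A : Finset α} {c₀ c₁ : ℝ}
    (hc₀ : 0 ≤ c₀) (hc₁ : 0 ≤ c₁) (hy₀ : ∀ i, c₀ ≤ y i) (hy₁ : ∀ i ∉ A, c₁ ≤ y i)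
    {f : Fin (k + 1) → α} (hf : f ∉ Fintype.piFinset fun _ => A) :
    c₀ ^ k * c₁ ≤ tensorPow y (k + 1) f := by
  obtain ⟨j, hj⟩ : ∃ j, f j ∉ A := by simpa using hf
  rw [tensorPow, ← mul_prod_erase univ _ (mem_univ j), mul_comm (c₀ ^ k)]
  refine mul_le_mul (hy₁ _ hj) ?_ (by positivity) (hc₁.trans (hy₁ _ hj))
  calc c₀ ^ k = ∏ _i ∈ univ.erase j, c₀ := by simp
    _ ≤ _ := prod_le_prod (fun _ _ => hc₀) fun _ _ => hy₀ _

variable [Fintype α] [DecidableEq α]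

def consSlice (S : Finset (Fin (k + 1) → α)) (i : α) : Finset (Fin k → α) :=
  {g | Fin.cons i g ∈ S}

def consFiber (S : Finset (Fin (k + 1) → α)) (g : Fin k → α) : Finset α :=
  {i | Fin.cons i g ∈ S}

theorem sum_eq_sum_sum_consSlice {M : Type*} [AddCommMonoid M] (S : Finset (Fin (k + 1) → α))
    (F : (Fin (k + 1) → α) → M) :
    ∑ f ∈ S, F f = ∑ i, ∑ g ∈ consSlice S i, F (Fin.cons i g) := by
  simp only [consSlice, sum_filter]
  rw [← Fintype.sum_prod_type', ← Fintype.sum_ite_mem, ← (Fin.consEquiv fun _ => α).sum_comp]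
  rfl

theorem sum_tensorPow_succ (x : α → ℝ) (S : Finset (Fin (k + 1) → α)) :
    ∑ f ∈ S, tensorPow x (k + 1) f = ∑ i, x i * ∑ g ∈ consSlice S i, tensorPow x k g := by
  simp only [sum_eq_sum_sum_consSlice S, tensorPow, Fin.prod_univ_succ, Fin.cons_zero,
    Fin.cons_succ, mul_sum]

theorem sum_mul_sum_consSlice (x y : α → ℝ) (S : Finset (Fin (k + 1) → α)) :
    ∑ i, x i * ∑ g ∈ consSlice S i, tensorPow y k g =
      ∑ g, tensorPow y k g * ∑ i ∈ consFiber S g, x i := by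
  simp only [mul_sum, mul_comm (tensorPow y k _) (x _)]
  exact sum_comm' fun i g => by simp [consSlice, consFiber]

theorem mul_sum_tensorPow_succ (c : ℝ) (y : α → ℝ) (S : Finset (Fin (k + 1) → α)) :
    c * ∑ f ∈ S, tensorPow y (k + 1) f =
      ∑ g, tensorPow y k g * (c * ∑ i ∈ consFiber S g, y i) := by
  rw [sum_tensorPow_succ, sum_mul_sum_consSlice, mul_sum]
  simp only [mul_left_comm]

theorem sum_mul_le_sum_tensorPow_succ {x y : α → ℝ} (hx : 0 ≤ x) {c : ℝ}
    {S : Finset (Fin (k + 1) → α)}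
    (hS : ∀ i, c * ∑ g ∈ consSlice S i, tensorPow y k g ≤ ∑ g ∈ consSlice S i, tensorPow x k g) :
    c * ∑ i, x i * ∑ g ∈ consSlice S i, tensorPow y k g ≤ ∑ f ∈ S, tensorPow x (k + 1) f := by
  rw [sum_tensorPow_succ, mul_sum]
  refine sum_le_sum fun i _ => ?_
  rw [mul_left_comm]
  exact mul_le_mul_of_nonneg_left (hS i) (hx i)

theorem eq_empty_or_eq_piFinset_of_consFiber {S : Finset (Fin (k + 1) → α)} {A : Finset α}
    (hfib : ∀ g, consFiber S g = ∅ ∨ consFiber S g = A) {i₀ : α} (hi₀ : i₀ ∈ A)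
    (hslice : consSlice S i₀ = ∅ ∨ consSlice S i₀ = Fintype.piFinset fun _ => A) :
    S = ∅ ∨ S = Fintype.piFinset fun _ => A := by
  have hmem : ∀ f, f ∈ S ↔ f 0 ∈ A ∧ Fin.tail f ∈ consSlice S i₀ := by
    intro f
    have hf : f ∈ S ↔ f 0 ∈ consFiber S (Fin.tail f) := by simp [consFiber]
    have hi : Fin.tail f ∈ consSlice S i₀ ↔ i₀ ∈ consFiber S (Fin.tail f) := by
      simp [consSlice, consFiber]
    rcases hfib (Fin.tail f) with h | h <;> simp [hf, hi, h, hi₀]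
  refine hslice.imp (fun h => ?_) fun h => ?_
  · exact eq_empty_of_forall_notMem fun f hf => by simpa [h] using ((hmem f).1 hf).2
  · ext f
    simp [hmem, h, Fin.forall_fin_succ, Fin.tail]

variable [Preorder α]

theorem IsUpperSet.consSlice {S : Finset (Fin (k + 1) → α)}
    (hS : IsUpperSet (S : Set (Fin (k + 1) → α))) (i : α) :
    IsUpperSet (consSlice S i : Set (Fin k → α)) := fun g g' hg hmem => by
  simp only [_root_.consSlice, coe_filter, mem_univ, true_and, Set.mem_ofPred_eq] at hmem ⊢
  exact hS (Fin.cons_le_cons.2 ⟨le_rfl, hg⟩) hmem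

theorem IsUpperSet.consFiber {S : Finset (Fin (k + 1) → α)}
    (hS : IsUpperSet (S : Set (Fin (k + 1) → α))) (g : Fin k → α) :
    IsUpperSet (consFiber S g : Set α) := fun i i' hi hmem => by
  simp only [_root_.consFiber, coe_filter, mem_univ, true_and, Set.mem_ofPred_eq] at hmem ⊢
  exact hS (Fin.cons_le_cons.2 ⟨hi, le_rfl⟩) hmem

end TensorPow

structure UpperDominates {α : Type*} [Preorder α] (lam : ℝ) (x y : α → ℝ) (A : Finset α) :
    Prop where
  isUpperSet : IsUpperSet (A : Set α)
  le : ∀ U : Finset α, IsUpperSet (U : Set α) → lam * ∑ i ∈ U, y i ≤ ∑ i ∈ U, x i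
  eq_iff : ∀ U : Finset α, IsUpperSet (U : Set α) →
    (lam * ∑ i ∈ U, y i = ∑ i ∈ U, x i ↔ U = ∅ ∨ U = A)

namespace UpperDominates

variable {α : Type*} [Preorder α] {lam : ℝ} {x y : α → ℝ} {A : Finset α}

theorem exists_mem_pos (h : UpperDominates lam x y A) (hlam : 0 < lam) (hy : ∀ i, 0 < y i)
    (hA : A.Nonempty) : ∃ i ∈ A, 0 < x i := by
  refine exists_lt_of_sum_lt (f := fun _ => 0) ?_
  rw [sum_const_zero, ← (h.eq_iff A h.isUpperSet).2 (Or.inr rfl)]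
  exact mul_pos hlam (sum_pos (fun i _ => hy i) hA)

variable [Fintype α] [DecidableEq α]

theorem mul_sum_tensorPow_succ_le (h : UpperDominates lam x y A) (hy : 0 ≤ y) {k : ℕ}
    {S : Finset (Fin (k + 1) → α)} (hS : IsUpperSet (S : Set (Fin (k + 1) → α))) :
    lam * ∑ f ∈ S, tensorPow y (k + 1) f ≤ ∑ i, x i * ∑ g ∈ consSlice S i, tensorPow y k g := by
  rw [mul_sum_tensorPow_succ, sum_mul_sum_consSlice]
  refine sum_le_sum fun g _ => ?_
  exact mul_le_mul_of_nonneg_left (h.le _ (hS.consFiber g)) (tensorPow_nonneg hy g)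

theorem pow_mul_sum_tensorPow_le (h : UpperDominates lam x y A) (hlam : 0 ≤ lam) (hx : 0 ≤ x)
    (hy : 0 ≤ y) : ∀ {k : ℕ} {S : Finset (Fin k → α)}, IsUpperSet (S : Set (Fin k → α)) →
      lam ^ k * ∑ f ∈ S, tensorPow y k f ≤ ∑ f ∈ S, tensorPow x k f
  | 0, S, _ => by simp [tensorPow]
  | k + 1, S, hS =>
    calc lam ^ (k + 1) * ∑ f ∈ S, tensorPow y (k + 1) f
        = lam ^ k * (lam * ∑ f ∈ S, tensorPow y (k + 1) f) := by ring
      _ ≤ lam ^ k * ∑ i, x i * ∑ g ∈ consSlice S i, tensorPow y k g := by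
        gcongr; exact h.mul_sum_tensorPow_succ_le hy hS
      _ ≤ ∑ f ∈ S, tensorPow x (k + 1) f := sum_mul_le_sum_tensorPow_succ hx
        fun i => h.pow_mul_sum_tensorPow_le hlam hx hy (hS.consSlice i)

theorem eq_empty_or_eq_piFinset (h : UpperDominates lam x y A) (hlam : 0 < lam) (hx : 0 ≤ x)
    (hy : ∀ i, 0 < y i) : ∀ {k : ℕ} {S : Finset (Fin k → α)}, IsUpperSet (S : Set (Fin k → α)) →
      lam ^ k * ∑ f ∈ S, tensorPow y k f = ∑ f ∈ S, tensorPow x k f →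
        S = ∅ ∨ S = Fintype.piFinset fun _ => A
  | 0, S, _, _ => S.eq_empty_or_nonempty.imp_right fun hS => by
      ext f; simp [hS.eq_univ]
  | k + 1, S, hS, heq => by
    have hy0 : 0 ≤ y := fun i => (hy i).le
    have hslice_le i := h.pow_mul_sum_tensorPow_le hlam.le hx hy0 (hS.consSlice i)
    have hle₁ := h.mul_sum_tensorPow_succ_le hy0 hS
    have hle₂ := sum_mul_le_sum_tensorPow_succ hx hslice_le
    have heq₁ : lam * ∑ f ∈ S, tensorPow y (k + 1) f =
        ∑ i, x i * ∑ g ∈ consSlice S i, tensorPow y k g := by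
      refine le_antisymm hle₁ (le_of_mul_le_mul_left ?_ (pow_pos hlam k))
      rw [← mul_assoc, ← pow_succ, heq]
      exact hle₂
    have heq₂ : lam ^ k * ∑ i, x i * ∑ g ∈ consSlice S i, tensorPow y k g =
        ∑ f ∈ S, tensorPow x (k + 1) f := by
      refine le_antisymm hle₂ ?_
      rw [← heq, pow_succ, mul_assoc]
      exact mul_le_mul_of_nonneg_left hle₁ (by positivity)
    have hfib g : consFiber S g = ∅ ∨ consFiber S g = A := by
      refine (h.eq_iff _ (hS.consFiber g)).1 <| eq_of_pos_of_sum_mul_eq_sum_mul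
        (fun g _ => tensorPow_nonneg hy0 g) (fun g _ => h.le _ (hS.consFiber g)) ?_ (mem_univ g)
        (tensorPow_pos hy g)
      rw [← mul_sum_tensorPow_succ, heq₁, sum_mul_sum_consSlice]
    rcases A.eq_empty_or_nonempty with rfl | hA
    · refine Or.inl (eq_empty_of_forall_notMem fun f hf => ?_)
      have hf' : f 0 ∈ consFiber S (Fin.tail f) := by simpa [consFiber] using hf
      simp [(hfib _).elim id id] at hf'
    obtain ⟨i₀, hi₀, hxi₀⟩ := h.exists_mem_pos hlam hy hA
    refine eq_empty_or_eq_piFinset_of_consFiber hfib hi₀ <| eq_empty_or_eq_piFinset h hlam hx hy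
      (hS.consSlice i₀) <| eq_of_pos_of_sum_mul_eq_sum_mul (fun i _ => hx i)
        (fun i _ => hslice_le i) ?_ (mem_univ i₀) hxi₀
    rw [← sum_tensorPow_succ, ← heq₂, mul_sum]
    simp only [mul_left_comm]

theorem pow (h : UpperDominates lam x y A) (hlam : 0 < lam) (hx : 0 ≤ x) (hy : ∀ i, 0 < y i)
    (k : ℕ) : UpperDominates (lam ^ k) (tensorPow x k) (tensorPow y k)
      (Fintype.piFinset fun _ => A) where
  isUpperSet f g hfg hf := by
    simp only [Fintype.mem_piFinset, mem_coe] at hf ⊢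
    exact fun j => h.isUpperSet (hfg j) (hf j)
  le _ hS := h.pow_mul_sum_tensorPow_le hlam.le hx (fun i => (hy i).le) hS
  eq_iff _ hS := by
    refine ⟨h.eq_empty_or_eq_piFinset hlam hx hy hS, ?_⟩
    rintro (rfl | rfl)
    · simp
    · rw [sum_tensorPow_piFinset, sum_tensorPow_piFinset, ← mul_pow,
        (h.eq_iff A h.isUpperSet).2 (Or.inr rfl)]

end UpperDominates

section Tpow

variable {n k : ℕ}

theorem ESum_tpow_le_sum (v : Fin n → ℝ) (S : Finset (Fin k → Fin n)) :
    ESum (tpow v k) #S ≤ ∑ f ∈ S, tensorPow v k f := by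
  simpa [sum_map, tpow, tensorPow] using
    ESum_le_sum (tpow v k) (S.map finFunctionFinEquiv.toEmbedding)

theorem exists_ESum_tpow_eq (v : Fin n → ℝ) {l : ℕ} (hl : l ≤ n ^ k) :
    ∃ S : Finset (Fin k → Fin n), #S = l ∧ ESum (tpow v k) l = ∑ f ∈ S, tensorPow v k f := by
  obtain ⟨s, hs, he⟩ := exists_ESum_eq (tpow v k) hl
  exact ⟨s.map finFunctionFinEquiv.symm.toEmbedding, by simpa using hs, by rw [he, sum_map]; rfl⟩

theorem exists_isUpperSet_sum_tensorPow_le_ESum_tpow {x : Fin n → ℝ} (hx : 0 ≤ x)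
    (hxa : Antitone x) {l : ℕ} (hl : l ≤ n ^ k) :
    ∃ S : Finset (Fin k → Fin n), #S = l ∧ IsUpperSet (S : Set (Fin k → Fin n)) ∧
      ∑ f ∈ S, tensorPow x k f ≤ ESum (tpow x k) l := by
  obtain ⟨S, hS, he⟩ := exists_ESum_tpow_eq x hl
  obtain ⟨T, hT, hTu, hTS⟩ := exists_isUpperSet_card_eq_sum_le (tensorPow_antitone hx hxa) S
  exact ⟨T, hT.trans hS, hTu, he ▸ hTS⟩

end Tpow

section Threshold

variable {n d k : ℕ} {lam : ℝ} {x y : Fin n → ℝ}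

theorem upperDominates_of_mem_Kdlam (hx : x ∈ Kdlam lam y d) (hya : Antitone y) (hlam : 0 ≤ lam)
    (hdn : d < n) : UpperDominates lam x y (Ici ⟨d, hdn⟩) := by
  obtain ⟨⟨-, -, hxa⟩, hsup, htight⟩ := hx
  refine ⟨by simpa using isUpperSet_Ici _, fun U hU => ?_, fun U hU => ?_⟩ <;>
    rcases U.eq_empty_or_nonempty with rfl | hne
  · simp
  · rw [sum_eq_ESum_of_isUpperSet hya hU, sum_eq_ESum_of_isUpperSet hxa hU,
      ← ESum_const_mul y (card_finset_fin_le U) hlam]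
    exact hsup _ hne.card_pos (card_finset_fin_le U)
  · simp
  · rw [sum_eq_ESum_of_isUpperSet hya hU, sum_eq_ESum_of_isUpperSet hxa hU, eq_comm,
      htight _ hne.card_pos (card_finset_fin_le U), or_iff_right hne.ne_empty]
    refine ⟨fun h => eq_of_isUpperSet_of_card_eq hU (by simpa using isUpperSet_Ici _) ?_, ?_⟩
    · rw [h, Fin.card_Ici]
    · rintro rfl
      rw [Fin.card_Ici]

theorem sum_tensorPow_piFinset_Ici_le (hy : ∀ i, 0 < y i) (hya : Antitone y) (hdn : d < n)
    (hcond : y ⟨d, hdn⟩ ^ (k + 1) ≤ y ⟨n - 1, by omega⟩ ^ k * y ⟨d - 1, by omega⟩)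
    {S : Finset (Fin (k + 1) → Fin n)}
    (hS : #S = #(Fintype.piFinset fun _ : Fin (k + 1) => Ici (⟨d, hdn⟩ : Fin n))) :
    ∑ f ∈ Fintype.piFinset (fun _ : Fin (k + 1) => Ici (⟨d, hdn⟩ : Fin n)), tensorPow y (k + 1) f
      ≤ ∑ f ∈ S, tensorPow y (k + 1) f :=
  sum_le_sum_of_card_eq_of_forall_sdiff_le hS.symm fun f hf g hg =>
    calc tensorPow y (k + 1) f ≤ y ⟨d, hdn⟩ ^ (k + 1) :=
          tensorPow_le_pow_of_mem_piFinset (fun i => (hy i).le)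
            (fun i hi => hya (mem_Ici.1 hi)) (mem_sdiff.1 hf).1
      _ ≤ _ := hcond
      _ ≤ tensorPow y (k + 1) g :=
          pow_mul_le_tensorPow_of_notMem_piFinset (hy _).le (hy _).le
            (fun i => hya (Fin.le_def.2 (by dsimp only; omega)))
            (fun i hi => hya (Fin.le_def.2 (by simp [Fin.le_def] at hi; dsimp only; omega)))
            (mem_sdiff.1 hg).2

theorem ESum_tpow_lt_sum_tensorPow_piFinset_Ici (hd : 0 < d) (hdn : d < n)
    (hcond : y ⟨n - 1, by omega⟩ ^ k * y ⟨d - 1, by omega⟩ < y ⟨d, hdn⟩ ^ (k + 1)) :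
    ESum (tpow y (k + 1)) #(Fintype.piFinset fun _ : Fin (k + 1) => Ici (⟨d, hdn⟩ : Fin n)) <
      ∑ f ∈ Fintype.piFinset (fun _ : Fin (k + 1) => Ici (⟨d, hdn⟩ : Fin n)),
        tensorPow y (k + 1) f := by
  set B := Fintype.piFinset fun _ : Fin (k + 1) => Ici (⟨d, hdn⟩ : Fin n)
  set f : Fin (k + 1) → Fin n := fun _ => ⟨d, hdn⟩
  set g : Fin (k + 1) → Fin n := Fin.cons ⟨d - 1, by omega⟩ fun _ => ⟨n - 1, by omega⟩
  have hf : f ∈ B := by simp [B, f]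
  have hg : g ∉ B := fun h => by
    have := Fin.le_def.1 (mem_Ici.1 (Fintype.mem_piFinset.1 h 0))
    simp [g] at this
    omega
  have hswap := sum_insert_erase_add hf hg (tensorPow y (k + 1))
  have hESum := ESum_tpow_le_sum y (insert g (B.erase f))
  rw [card_insert_erase hf hg] at hESum
  have hfv : tensorPow y (k + 1) f = y ⟨d, hdn⟩ ^ (k + 1) := by simp [tensorPow, f]
  have hgv : tensorPow y (k + 1) g = y ⟨n - 1, by omega⟩ ^ k * y ⟨d - 1, by omega⟩ := by
    simp [tensorPow, g, Fin.prod_univ_succ, mul_comm]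
  linarith

theorem not_SSupMaj_tpow_of_le (hdn : d < n) (h : UpperDominates lam x y (Ici ⟨d, hdn⟩))
    (hlam : 0 < lam) (hx : 0 ≤ x) (hy : ∀ i, 0 < y i) (hya : Antitone y)
    (hcond : y ⟨d, hdn⟩ ^ (k + 1) ≤ y ⟨n - 1, by omega⟩ ^ k * y ⟨d - 1, by omega⟩) :
    ¬ SSupMaj (tpow x (k + 1)) (fun i => lam ^ (k + 1) * tpow y (k + 1) i) := by
  set B := Fintype.piFinset fun _ : Fin (k + 1) => Ici (⟨d, hdn⟩ : Fin n)
  have hB : #B ≤ n ^ (k + 1) := card_le_univ B |>.trans_eq (by simp)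
  intro hss
  have hlt := hss #B (card_pos.2 ⟨fun _ => ⟨d, hdn⟩, by simp [B]⟩) (by simpa using hB)
  rw [ESum_const_mul _ (by simpa using hB) (by positivity)] at hlt
  obtain ⟨S, hS, hSe⟩ := exists_ESum_tpow_eq y hB
  have hpow := h.pow hlam hx hy (k + 1)
  have htight := (hpow.eq_iff B hpow.isUpperSet).2 (Or.inr rfl)
  refine hlt.not_ge ?_
  calc ESum (tpow x (k + 1)) #B ≤ ∑ f ∈ B, tensorPow x (k + 1) f := ESum_tpow_le_sum x B
    _ = lam ^ (k + 1) * ∑ f ∈ B, tensorPow y (k + 1) f := htight.symm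
    _ ≤ lam ^ (k + 1) * ∑ f ∈ S, tensorPow y (k + 1) f :=
      mul_le_mul_of_nonneg_left (sum_tensorPow_piFinset_Ici_le hy hya hdn hcond hS) (by positivity)
    _ = lam ^ (k + 1) * ESum (tpow y (k + 1)) #B := by rw [hSe]

theorem SSupMaj_tpow_of_lt (hd : 0 < d) (hdn : d < n) (h : UpperDominates lam x y (Ici ⟨d, hdn⟩))
    (hlam : 0 < lam) (hx : 0 ≤ x) (hxa : Antitone x) (hy : ∀ i, 0 < y i)
    (hcond : y ⟨n - 1, by omega⟩ ^ k * y ⟨d - 1, by omega⟩ < y ⟨d, hdn⟩ ^ (k + 1)) :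
    SSupMaj (tpow x (k + 1)) (fun i => lam ^ (k + 1) * tpow y (k + 1) i) := by
  intro l hl1 hl
  rw [ESum_const_mul _ hl (by positivity)]
  obtain ⟨S, rfl, hSu, hSx⟩ := exists_isUpperSet_sum_tensorPow_le_ESum_tpow hx hxa hl
  refine lt_of_lt_of_le ?_ hSx
  have hpow := h.pow hlam hx hy (k + 1)
  by_cases hSB : S = Fintype.piFinset fun _ => Ici ⟨d, hdn⟩
  · rw [hSB] at hSu ⊢
    exact (mul_lt_mul_of_pos_left (ESum_tpow_lt_sum_tensorPow_piFinset_Ici hd hdn hcond)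
      (by positivity)).trans_le (hpow.le _ hSu)
  · have hne : lam ^ (k + 1) * ∑ f ∈ S, tensorPow y (k + 1) f ≠ ∑ f ∈ S, tensorPow x (k + 1) f :=
      fun he => ((hpow.eq_iff S hSu).1 he).elim
        (fun h0 => by simp [h0] at hl1) hSB
    calc lam ^ (k + 1) * ESum (tpow y (k + 1)) #S
        ≤ lam ^ (k + 1) * ∑ f ∈ S, tensorPow y (k + 1) f := by
          gcongr; exact ESum_tpow_le_sum y S
      _ < _ := (hpow.le S hSu).lt_of_ne hne

end Threshold

/-- Indices are `0`-based: `y ⟨d, _⟩` is the paper's `y_{d+1}` and `y ⟨n - 1, _⟩` its `y_n`. -/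
theorem stmt19 {n : ℕ} (d k : ℕ) (hd1 : 0 < d) (hd2 : d + 1 < n) (hk : 1 ≤ k)
    (lam : ℝ) (hlam : 0 < lam ∧ lam < 1)
    (y : Fin n → ℝ) (hy : y ∈ Vn n) (hypos : ∀ i, 0 < y i) :
    ∀ x ∈ Kdlam lam y d,
      (SSupMaj (tpow x k) (fun i => lam ^ k * tpow y k i) ↔
        y ⟨d, by omega⟩ ^ k > y ⟨n - 1, by omega⟩ ^ (k - 1) * y ⟨d - 1, by omega⟩) := by
  intro x hx
  obtain ⟨m, rfl⟩ : ∃ m, k = m + 1 := ⟨k - 1, by omega⟩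
  have hdn : d < n := by omega
  have h := upperDominates_of_mem_Kdlam hx hy.2.2 hlam.1.le hdn
  rw [Nat.add_sub_cancel, gt_iff_lt]
  refine ⟨fun hss => ?_, SSupMaj_tpow_of_lt hd1 hdn h hlam.1 hx.1.1 hx.1.2.2 hypos⟩
  by_contra! hcond
  exact not_SSupMaj_tpow_of_le hdn h hlam.1 hx.1.1 hypos hy.2.2 hcond hss

end
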